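/- arXiv:2310.13086 — 2 statements merged into one kernel-verified Lean document; each statement's English description precedes it below -/
import Mathlib

section
/- Let (Ω, F) be a measurable space with a filtration (F_t)_{t∈ℝ₊} satisfying ⋁_{t} F_t ⊆ F. Let ℰ* := {⋃_{k=1}^{n} ⟦ρ_k, τ_k⟧ : n ∈ ℕ, ρ_k predictable times, τ_k stopping times with τ_k < ∞} ∪ {∅}. Then every set P in the predictable σ-algebra 𝒫 is produced by the Souslin operation applied to a monotone Souslin scheme with values in ℰ*. -/
open MeasureTheory Set
open scoped NNReal ENNReal


variable {Ω : Type*}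

/-- A stopping time with respect to the filtration `𝔽`. -/
def IsStopTime {F : MeasurableSpace Ω} (𝔽 : Filtration ℝ≥0 F) (τ : Ω → ℝ≥0∞) : Prop :=
  ∀ t : ℝ≥0, MeasurableSet[𝔽 t] {ω | τ ω ≤ (t : ℝ≥0∞)}

/-- A predictable time: a stopping time announced by a nondecreasing sequence of
finite stopping times. -/
def IsPredTime {F : MeasurableSpace Ω} (𝔽 : Filtration ℝ≥0 F) (ρ : Ω → ℝ≥0∞) : Prop :=
  IsStopTime 𝔽 ρ ∧ ∃ ρs : ℕ → Ω → ℝ≥0∞,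
    (∀ n, IsStopTime 𝔽 (ρs n)) ∧ (∀ n ω, ρs n ω < ⊤) ∧ (∀ n ω, ρs n ω ≤ ρ ω) ∧
    (∀ n ω, 0 < ρ ω → ρs n ω < ρ ω) ∧ (∀ ω, Monotone fun n => ρs n ω) ∧
    (∀ ω, Filter.Tendsto (fun n => ρs n ω) Filter.atTop (nhds (ρ ω)))

/-- The graph `⟦τ⟧ ⊆ Ω × ℝ₊` of `τ : Ω → [0,∞]`. -/
def graph (τ : Ω → ℝ≥0∞) : Set (Ω × ℝ≥0) := {p | τ p.1 = (p.2 : ℝ≥0∞)}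

/-- The stochastic interval `⟦τ, ∞⟦`. -/
def rayFrom (τ : Ω → ℝ≥0∞) : Set (Ω × ℝ≥0) := {p | τ p.1 ≤ (p.2 : ℝ≥0∞)}

/-- The stochastic interval `⟦ρ, τ⟧`. -/
def stInterval (ρ τ : Ω → ℝ≥0∞) : Set (Ω × ℝ≥0) :=
  {p | ρ p.1 ≤ (p.2 : ℝ≥0∞) ∧ (p.2 : ℝ≥0∞) ≤ τ p.1}

/-- The predictable σ-algebra on `Ω × ℝ₊`. -/
def predictableSigma {F : MeasurableSpace Ω} (𝔽 : Filtration ℝ≥0 F) :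
    MeasurableSpace (Ω × ℝ≥0) :=
  MeasurableSpace.generateFrom {s | ∃ ρ, IsPredTime 𝔽 ρ ∧ s = rayFrom ρ}

/-- The optional σ-algebra on `Ω × ℝ₊`. -/
def optionalSigma {F : MeasurableSpace Ω} (𝔽 : Filtration ℝ≥0 F) :
    MeasurableSpace (Ω × ℝ≥0) :=
  MeasurableSpace.generateFrom {s | ∃ τ, IsStopTime 𝔽 τ ∧ s = rayFrom τ}

/-- The debut of a set `S ⊆ Ω × ℝ₊`. -/
noncomputable def debut (S : Set (Ω × ℝ≥0)) (ω : Ω) : ℝ≥0∞ :=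
  ⨅ (t : ℝ≥0) (_ : (ω, t) ∈ S), (t : ℝ≥0∞)

/-- Projection of a subset of `Ω × ℝ₊` onto `Ω`. -/
def projOmega (S : Set (Ω × ℝ≥0)) : Set Ω := Prod.fst '' S

/-- The outer measure `ℙ*` induced by `ℙ`. -/
noncomputable def pstar {F : MeasurableSpace Ω} (P : Measure Ω) (A : Set Ω) : ℝ≥0∞ :=
  ⨅ (E : Set Ω) (_ : A ⊆ E) (_ : MeasurableSet E), P E


/-- A Souslin scheme with values in `ℰ ∪ {E}`: `A k s` is the set indexed by the
finite sequence `(s 0, …, s k)` of length `k+1`. -/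
def IsSouslinScheme {E : Type*} (ℰ : Set (Set E)) (A : (k : ℕ) → (Fin (k + 1) → ℕ) → Set E) :
    Prop :=
  ∀ k s, A k s ∈ ℰ ∨ A k s = Set.univ

/-- The set produced by the Souslin operation: `⋃_{n ∈ ℕ^ℕ} ⋂_k A_{n₁,…,n_k}`. -/
def souslinSet {E : Type*} (A : (k : ℕ) → (Fin (k + 1) → ℕ) → Set E) : Set E :=
  ⋃ f : ℕ → ℕ, ⋂ k : ℕ, A k fun i => f i

/-- The Souslin class `S(ℰ)`. -/
def SouslinClass {E : Type*} (ℰ : Set (Set E)) : Set (Set E) :=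
  {S | ∃ A, IsSouslinScheme ℰ A ∧ S = souslinSet A}

/-- A Souslin scheme is monotone if it is vertically and horizontally monotone. -/
def IsMonotoneScheme {E : Type*} (A : (k : ℕ) → (Fin (k + 1) → ℕ) → Set E) : Prop :=
  (∀ (k : ℕ) (s : Fin (k + 2) → ℕ), A (k + 1) s ⊆ A k fun i => s i.castSucc) ∧
  (∀ (k : ℕ) (s t : Fin (k + 1) → ℕ), (∀ i, s i ≤ t i) → A k s ⊆ A k t)

/-- The class `ℰ*` of finite unions of stochastic intervals `⟦ρ_k, τ_k⟧` with `ρ_k`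
predictable times and `τ_k` finite stopping times, together with `∅`. -/
def EStar {Ω : Type*} {F : MeasurableSpace Ω} (𝔽 : Filtration ℝ≥0 F) :
    Set (Set (Ω × ℝ≥0)) :=
  {D | D = ∅ ∨ ∃ (n : ℕ) (ρ τ : Fin (n + 1) → Ω → ℝ≥0∞),
    (∀ k, IsPredTime 𝔽 (ρ k)) ∧ (∀ k, IsStopTime 𝔽 (τ k)) ∧ (∀ k ω, τ k ω < ⊤) ∧
    D = ⋃ k, stInterval (ρ k) (τ k)}

/-!
Call a set *good* if it is produced by a monotone Souslin scheme with values in `ℰ*`. Good sets are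
closed under countable intersections (interleave the schemes through a pairing of `ℕ`) and
countable unions (let the first coordinate bound the index of the component scheme; monotonicity
then lets a pigeonhole argument single out one component), because `ℰ*` is closed under finite
unions and intersections. Each generator `⟦ρ, ∞⟦` of `𝒫` is the union of the `⟦ρ, n⟧`, and its
complement is the union of the `⟦ρ⁰, ρₙ⟧` for an announcing sequence `ρₙ`, where the predictable
time `ρ⁰` is `∞` on `{ρ = 0}` and `0` elsewhere. Hence the sets `S` with `S` and `Sᶜ` both good
form a σ-algebra containing the generators of `𝒫`.
-/

section StoppingTimes

variable {F : MeasurableSpace Ω} {𝔽 : Filtration ℝ≥0 F}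

lemma isStopTime_const (c : ℝ≥0∞) : IsStopTime 𝔽 fun _ => c :=
  fun _ => MeasurableSet.const _

lemma IsStopTime.inf {τ τ' : Ω → ℝ≥0∞} (hτ : IsStopTime 𝔽 τ) (hτ' : IsStopTime 𝔽 τ') :
    IsStopTime 𝔽 (τ ⊓ τ') := by
  intro t
  simp only [Pi.inf_apply, inf_le_iff, ofPred_or]
  exact (hτ t).union (hτ' t)

lemma IsStopTime.sup {τ τ' : Ω → ℝ≥0∞} (hτ : IsStopTime 𝔽 τ) (hτ' : IsStopTime 𝔽 τ') :
    IsStopTime 𝔽 (τ ⊔ τ') := by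
  intro t
  simp only [Pi.sup_apply, sup_le_iff, ofPred_and]
  exact (hτ t).inter (hτ' t)

lemma isStopTime_indicator_const {A : Set Ω} (hA : MeasurableSet[𝔽 0] A) (c : ℝ≥0∞) :
    IsStopTime 𝔽 (A.indicator fun _ => c) := by
  intro t
  have hset : {ω | A.indicator (fun _ => c) ω ≤ t} = Aᶜ ∪ {_ω | c ≤ t} := by
    ext ω
    by_cases hω : ω ∈ A <;> simp [hω]
  rw [hset]
  exact (𝔽.mono (zero_le : 0 ≤ t) _ hA).compl.union (MeasurableSet.const _)

lemma lt_sup_of_le_of_lt_of_pos {a b x : ℝ≥0∞} (hle : b ≤ a) (hlt : 0 < a → b < a)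
    (h : 0 < a ⊔ x) : b < a ⊔ x := by
  rcases eq_zero_or_pos a with rfl | ha
  · exact hle.trans_lt h
  · exact (hlt ha).trans_le le_sup_left

lemma IsPredTime.sup {ρ ρ' : Ω → ℝ≥0∞} (hρ : IsPredTime 𝔽 ρ) (hρ' : IsPredTime 𝔽 ρ') :
    IsPredTime 𝔽 (ρ ⊔ ρ') := by
  obtain ⟨hρ, ρs, hρs, hfin, hle, hlt, hmono, htend⟩ := hρ
  obtain ⟨hρ', ρs', hρs', hfin', hle', hlt', hmono', htend'⟩ := hρ'
  refine ⟨hρ.sup hρ', ρs ⊔ ρs', fun n => (hρs n).sup (hρs' n),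
    fun n ω => max_lt (hfin n ω) (hfin' n ω), fun n ω => sup_le_sup (hle n ω) (hle' n ω),
    fun n ω h => max_lt (lt_sup_of_le_of_lt_of_pos (hle n ω) (hlt n ω) h) ?_,
    fun ω => (hmono ω).sup (hmono' ω), fun ω => (htend ω).max (htend' ω)⟩
  rw [Pi.sup_apply, sup_comm] at h ⊢
  exact lt_sup_of_le_of_lt_of_pos (hle' n ω) (hlt' n ω) h

lemma isPredTime_indicator_top {A : Set Ω} (hA : MeasurableSet[𝔽 0] A) :
    IsPredTime 𝔽 (A.indicator fun _ => ∞) := by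
  refine ⟨isStopTime_indicator_const hA ∞, fun n => A.indicator fun _ => n,
    fun n => isStopTime_indicator_const hA n, fun n ω => ?_,
    fun n ω => indicator_le_indicator le_top, fun n ω h => ?_, fun ω => ?_, fun ω => ?_⟩
  · by_cases hω : ω ∈ A <;> simp [hω]
  · have hω : ω ∈ A := by by_contra hω; simp [hω] at h
    simp [hω]
  · by_cases hω : ω ∈ A
    · simpa [hω] using Nat.mono_cast
    · simp [hω, monotone_const]
  · by_cases hω : ω ∈ A
    · simpa [hω] using ENNReal.tendsto_nat_nhds_top
    · simp [hω]

lemma IsStopTime.measurableSet_eq_zero {ρ : Ω → ℝ≥0∞} (hρ : IsStopTime 𝔽 ρ) :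
    MeasurableSet[𝔽 0] {ω | ρ ω = 0} := by
  simpa using hρ 0

end StoppingTimes

section EStar

variable {F : MeasurableSpace Ω} {𝔽 : Filtration ℝ≥0 F}

lemma stInterval_inter_stInterval (ρ τ ρ' τ' : Ω → ℝ≥0∞) :
    stInterval ρ τ ∩ stInterval ρ' τ' = stInterval (ρ ⊔ ρ') (τ ⊓ τ') := by
  ext p
  simp only [stInterval, mem_inter_iff, mem_ofPred_eq, Pi.sup_apply, Pi.inf_apply, sup_le_iff,
    le_inf_iff]
  tauto

lemma mem_EStar_iff {D : Set (Ω × ℝ≥0)} :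
    D ∈ EStar 𝔽 ↔ ∃ s : Set ((Ω → ℝ≥0∞) × (Ω → ℝ≥0∞)), s.Finite ∧
      (∀ p ∈ s, IsPredTime 𝔽 p.1 ∧ IsStopTime 𝔽 p.2 ∧ ∀ ω, p.2 ω < ∞) ∧
      D = ⋃ p ∈ s, stInterval p.1 p.2 := by
  constructor
  · rintro (rfl | ⟨n, ρ, τ, hρ, hτ, hfin, rfl⟩)
    · exact ⟨∅, finite_empty, by simp, by simp⟩
    · exact ⟨range fun k => (ρ k, τ k), finite_range _,
        forall_mem_range.2 fun k => ⟨hρ k, hτ k, hfin k⟩, by rw [biUnion_range]⟩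
  · rintro ⟨s, hs, hsp, rfl⟩
    rcases s.eq_empty_or_nonempty with rfl | ⟨p₀, hp₀⟩
    · exact Or.inl (by simp)
    obtain ⟨n, f, hf⟩ := hs.fin_embedding
    set g : Fin (n + 1) → (Ω → ℝ≥0∞) × (Ω → ℝ≥0∞) := Fin.cons p₀ f
    have hrange : range g = s := by rw [Fin.range_cons, hf, insert_eq_of_mem hp₀]
    have hg (k : Fin (n + 1)) := hsp (g k) (hrange ▸ mem_range_self k)
    refine Or.inr ⟨n, fun k => (g k).1, fun k => (g k).2, fun k => (hg k).1,
      fun k => (hg k).2.1, fun k => (hg k).2.2, ?_⟩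
    rw [← hrange, biUnion_range]

lemma empty_mem_EStar : (∅ : Set (Ω × ℝ≥0)) ∈ EStar 𝔽 := Or.inl rfl

lemma stInterval_mem_EStar {ρ τ : Ω → ℝ≥0∞} (hρ : IsPredTime 𝔽 ρ) (hτ : IsStopTime 𝔽 τ)
    (hfin : ∀ ω, τ ω < ∞) : stInterval ρ τ ∈ EStar 𝔽 :=
  mem_EStar_iff.2 ⟨{(ρ, τ)}, finite_singleton _, by simp [hρ, hτ, hfin], by simp⟩

lemma union_mem_EStar {S T : Set (Ω × ℝ≥0)} (hS : S ∈ EStar 𝔽) (hT : T ∈ EStar 𝔽) :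
    S ∪ T ∈ EStar 𝔽 := by
  obtain ⟨s, hs, hsp, rfl⟩ := mem_EStar_iff.1 hS
  obtain ⟨t, ht, htp, rfl⟩ := mem_EStar_iff.1 hT
  exact mem_EStar_iff.2 ⟨s ∪ t, hs.union ht, fun p hp => hp.elim (hsp p) (htp p),
    (biUnion_union s t _).symm⟩

lemma inter_mem_EStar {S T : Set (Ω × ℝ≥0)} (hS : S ∈ EStar 𝔽) (hT : T ∈ EStar 𝔽) :
    S ∩ T ∈ EStar 𝔽 := by
  obtain ⟨s, hs, hsp, rfl⟩ := mem_EStar_iff.1 hS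
  obtain ⟨t, ht, htp, rfl⟩ := mem_EStar_iff.1 hT
  refine mem_EStar_iff.2 ⟨image2 (fun p q => (p.1 ⊔ q.1, p.2 ⊓ q.2)) s t, hs.image2 _ ht,
    forall_mem_image2.2 fun p hp q hq => ⟨(hsp p hp).1.sup (htp q hq).1,
      (hsp p hp).2.1.inf (htp q hq).2.1, fun ω => inf_lt_of_left_lt ((hsp p hp).2.2 ω)⟩, ?_⟩
  simp only [biUnion_image2, ← stInterval_inter_stInterval, iUnion₂_inter_iUnion₂]

end EStar

section SouslinSchemes

variable {E : Type*}

abbrev SouslinScheme (E : Type*) := (k : ℕ) → (Fin (k + 1) → ℕ) → Set E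

def monotoneSouslinClass (ℰ : Set (Set E)) : Set (Set E) :=
  {S | ∃ A, IsSouslinScheme ℰ A ∧ IsMonotoneScheme A ∧ S = souslinSet A}

lemma IsMonotoneScheme.antitone {A : SouslinScheme E} (hA : IsMonotoneScheme A) (f : ℕ → ℕ) :
    Antitone fun k => A k fun i => f i :=
  antitone_nat_of_succ_le fun k => hA.1 k fun i => f i

section Closure

variable {ℰ : Set (Set E)}

lemma union_mem_or_eq_univ (hunion : ∀ S ∈ ℰ, ∀ T ∈ ℰ, S ∪ T ∈ ℰ) {S T : Set E}
    (hS : S ∈ ℰ ∨ S = univ) (hT : T ∈ ℰ ∨ T = univ) : S ∪ T ∈ ℰ ∨ S ∪ T = univ := by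
  rcases hS with hS | rfl
  · rcases hT with hT | rfl
    · exact .inl (hunion S hS T hT)
    · exact .inr (union_univ S)
  · exact .inr (univ_union T)

lemma inter_mem_or_eq_univ (hinter : ∀ S ∈ ℰ, ∀ T ∈ ℰ, S ∩ T ∈ ℰ) {S T : Set E}
    (hS : S ∈ ℰ ∨ S = univ) (hT : T ∈ ℰ ∨ T = univ) : S ∩ T ∈ ℰ ∨ S ∩ T = univ := by
  rcases hS with hS | rfl
  · rcases hT with hT | rfl
    · exact .inl (hinter S hS T hT)
    · rw [inter_univ]
      exact .inl hS
  · rwa [univ_inter]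

lemma biUnion_le_mem_or_eq_univ (hunion : ∀ S ∈ ℰ, ∀ T ∈ ℰ, S ∪ T ∈ ℰ) {X : ℕ → Set E}
    (hX : ∀ i, X i ∈ ℰ ∨ X i = univ) (n : ℕ) :
    (⋃ i ≤ n, X i) ∈ ℰ ∨ (⋃ i ≤ n, X i) = univ := by
  induction n with
  | zero => simpa using hX 0
  | succ n ih =>
    rw [biUnion_le_succ]
    exact union_mem_or_eq_univ hunion ih (hX _)

lemma iInter_mem_or_eq_univ (hinter : ∀ S ∈ ℰ, ∀ T ∈ ℰ, S ∩ T ∈ ℰ) {ι : Type*} [Finite ι]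
    {X : ι → Set E} (hX : ∀ i, X i ∈ ℰ ∨ X i = univ) :
    (⋂ i, X i) ∈ ℰ ∨ (⋂ i, X i) = univ := by
  classical
  cases nonempty_fintype ι
  suffices ∀ s : Finset ι, (⋂ i ∈ s, X i) ∈ ℰ ∨ (⋂ i ∈ s, X i) = univ by
    simpa using this Finset.univ
  intro s
  induction s using Finset.induction_on with
  | empty => simp
  | insert i s _ ih =>
    rw [Finset.set_biInter_insert]
    exact inter_mem_or_eq_univ hinter (hX i) ih

end Closure

/-- The first coordinate bounds the index of the component scheme; the remaining coordinates are
passed on to it. -/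
def unionScheme (A : ℕ → SouslinScheme E) : SouslinScheme E
  | 0, _ => univ
  | k + 1, s => ⋃ i ≤ s 0, A i k fun j => s j.succ

lemma IsSouslinScheme.unionScheme {ℰ : Set (Set E)} (hunion : ∀ S ∈ ℰ, ∀ T ∈ ℰ, S ∪ T ∈ ℰ)
    {A : ℕ → SouslinScheme E} (hA : ∀ i, IsSouslinScheme ℰ (A i)) :
    IsSouslinScheme ℰ (unionScheme A)
  | 0, _ => .inr rfl
  | k + 1, _ => biUnion_le_mem_or_eq_univ hunion (fun i => hA i k _) _

lemma IsMonotoneScheme.unionScheme {A : ℕ → SouslinScheme E}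
    (hA : ∀ i, IsMonotoneScheme (A i)) : IsMonotoneScheme (unionScheme A) := by
  constructor
  · rintro (_ | k) s
    · exact subset_univ _
    · exact biUnion_mono subset_rfl fun i _ => (hA i).1 k _
  · rintro (_ | k) s t hst
    · exact subset_rfl
    · exact biUnion_mono (fun i hi => le_trans hi (hst 0)) fun i _ =>
        (hA i).2 k _ _ fun j => hst j.succ

lemma exists_forall_of_antitone {ι : Type*} {S : Set ι} (hS : S.Finite) {P : ι → ℕ → Prop}
    (hP : ∀ i, Antitone (P i)) (h : ∀ k, ∃ i ∈ S, P i k) : ∃ i ∈ S, ∀ k, P i k := by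
  by_contra! hne
  have hev : ∀ i ∈ S, ∀ᶠ k in Filter.atTop, ¬ P i k := fun i hi => by
    obtain ⟨k₀, hk₀⟩ := hne i hi
    exact Filter.eventually_atTop.2 ⟨k₀, fun k hk hPk => hk₀ (hP i hk hPk)⟩
  obtain ⟨k, hk⟩ := ((Filter.eventually_all_finite hS).2 hev).exists
  obtain ⟨i, hi, hPi⟩ := h k
  exact hk i hi hPi

lemma souslinSet_unionScheme {A : ℕ → SouslinScheme E} (hA : ∀ i, IsMonotoneScheme (A i)) :
    souslinSet (unionScheme A) = ⋃ i, souslinSet (A i) := by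
  ext x
  simp only [souslinSet, mem_iUnion, mem_iInter]
  constructor
  · rintro ⟨f, hf⟩
    have hanti (i : ℕ) : Antitone fun k => x ∈ A i k fun j => f (j + 1) :=
      fun _ _ hkk' hx => (hA i).antitone (fun j => f (j + 1)) hkk' hx
    obtain ⟨i, -, hi⟩ := exists_forall_of_antitone (finite_Iic (f 0)) hanti
      fun k => by simpa [unionScheme] using hf (k + 1)
    exact ⟨i, fun j => f (j + 1), hi⟩
  · rintro ⟨i, g, hg⟩
    refine ⟨fun | 0 => i | n + 1 => g n, fun | 0 => mem_univ x | k + 1 => ?_⟩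
    exact mem_biUnion (le_refl i) (hg k)

end SouslinSchemes

section InterScheme

variable {E : Type*}

lemma pair_lt_succ_of_pair_le {i j k : ℕ} (h : Nat.pair i j ≤ k) (l : Fin (j + 1)) :
    Nat.pair i l < k + 1 := by
  have hmono : StrictMono (Nat.pair i) := fun _ _ => Nat.pair_lt_pair_right i
  exact Nat.lt_succ_of_le ((hmono.monotone (Nat.lt_succ_iff.1 l.isLt)).trans h)

/-- Coordinate `Nat.pair i l` of the sequence is coordinate `l` for the `i`-th scheme. -/
def interScheme (A : ℕ → SouslinScheme E) : SouslinScheme E := fun k s =>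
  ⋂ p : {p : ℕ × ℕ // Nat.pair p.1 p.2 ≤ k},
    A p.1.1 p.1.2 fun l => s ⟨Nat.pair p.1.1 l, pair_lt_succ_of_pair_le p.2 l⟩

instance finite_subtype_pair_le (k : ℕ) : Finite {p : ℕ × ℕ // Nat.pair p.1 p.2 ≤ k} :=
  ((finite_Iic k).preimage Nat.pairEquiv.injective.injOn).to_subtype

lemma IsSouslinScheme.interScheme {ℰ : Set (Set E)} (hinter : ∀ S ∈ ℰ, ∀ T ∈ ℰ, S ∩ T ∈ ℰ)
    {A : ℕ → SouslinScheme E} (hA : ∀ i, IsSouslinScheme ℰ (A i)) :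
    IsSouslinScheme ℰ (interScheme A) := fun _ _ =>
  iInter_mem_or_eq_univ hinter fun _ => hA _ _ _

lemma IsMonotoneScheme.interScheme {A : ℕ → SouslinScheme E}
    (hA : ∀ i, IsMonotoneScheme (A i)) : IsMonotoneScheme (interScheme A) :=
  ⟨fun k _ _ hx => mem_iInter.2 fun p => mem_iInter.1 hx ⟨p.1, p.2.trans k.le_succ⟩,
    fun _ _ _ hst => iInter_mono fun _ => (hA _).2 _ _ _ fun _ => hst _⟩

lemma souslinSet_interScheme (A : ℕ → SouslinScheme E) :
    souslinSet (interScheme A) = ⋂ i, souslinSet (A i) := by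
  ext x
  simp only [souslinSet, mem_iUnion, mem_iInter]
  constructor
  · rintro ⟨f, hf⟩ i
    exact ⟨fun l => f (Nat.pair i l), fun j => mem_iInter.1 (hf (Nat.pair i j)) ⟨(i, j), le_rfl⟩⟩
  · intro h
    choose g hg using h
    refine ⟨fun n => g n.unpair.1 n.unpair.2, fun k => mem_iInter.2 fun ⟨(i, j), _⟩ => ?_⟩
    simpa [Nat.unpair_pair] using hg i j

end InterScheme

section MonotoneSouslinClass

variable {E : Type*} {ℰ : Set (Set E)}

lemma mem_monotoneSouslinClass {S : Set E} (hS : S ∈ ℰ ∨ S = univ) :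
    S ∈ monotoneSouslinClass ℰ :=
  ⟨fun _ _ => S, fun _ _ => hS, ⟨fun _ _ => subset_rfl, fun _ _ _ _ => subset_rfl⟩,
    by simp only [souslinSet, iInter_const, iUnion_const]⟩

lemma iUnion_mem_monotoneSouslinClass (hunion : ∀ S ∈ ℰ, ∀ T ∈ ℰ, S ∪ T ∈ ℰ) {S : ℕ → Set E}
    (hS : ∀ i, S i ∈ monotoneSouslinClass ℰ) : ⋃ i, S i ∈ monotoneSouslinClass ℰ := by
  choose A hA hmono hSA using hS
  exact ⟨unionScheme A, .unionScheme hunion hA, .unionScheme hmono,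
    by rw [souslinSet_unionScheme hmono, iUnion_congr hSA]⟩

lemma iInter_mem_monotoneSouslinClass (hinter : ∀ S ∈ ℰ, ∀ T ∈ ℰ, S ∩ T ∈ ℰ) {S : ℕ → Set E}
    (hS : ∀ i, S i ∈ monotoneSouslinClass ℰ) : ⋂ i, S i ∈ monotoneSouslinClass ℰ := by
  choose A hA hmono hSA using hS
  exact ⟨interScheme A, .interScheme hinter hA, .interScheme hmono,
    by rw [souslinSet_interScheme, iInter_congr hSA]⟩

end MonotoneSouslinClass

lemma mem_of_measurableSet_generateFrom {α : Type*} {C M : Set (Set α)}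
    (hC : ∀ s ∈ C, s ∈ M ∧ sᶜ ∈ M) (hempty : ∅ ∈ M) (huniv : univ ∈ M)
    (hiUnion : ∀ f : ℕ → Set α, (∀ i, f i ∈ M) → ⋃ i, f i ∈ M)
    (hiInter : ∀ f : ℕ → Set α, (∀ i, f i ∈ M) → ⋂ i, f i ∈ M) {s : Set α}
    (hs : MeasurableSet[MeasurableSpace.generateFrom C] s) : s ∈ M := by
  suffices s ∈ M ∧ sᶜ ∈ M from this.1
  induction s, hs using MeasurableSpace.generateFrom_induction with
  | hC t ht _ => exact hC t ht
  | empty => exact ⟨hempty, compl_empty ▸ huniv⟩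
  | compl t _ ih => exact ⟨ih.2, (compl_compl t).symm ▸ ih.1⟩
  | iUnion f _ ih =>
    exact ⟨hiUnion f fun i => (ih i).1, (compl_iUnion f).symm ▸ hiInter _ fun i => (ih i).2⟩

section Generators

variable {F : MeasurableSpace Ω} {𝔽 : Filtration ℝ≥0 F}

lemma rayFrom_eq_iUnion_stInterval (ρ : Ω → ℝ≥0∞) :
    rayFrom ρ = ⋃ n : ℕ, stInterval ρ fun _ => n := by
  ext ⟨ω, t⟩
  simp only [rayFrom, stInterval, mem_ofPred_eq, mem_iUnion, exists_and_left, iff_self_and]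
  intro _
  obtain ⟨n, hn⟩ := exists_nat_ge t
  exact ⟨n, mod_cast hn⟩

lemma compl_rayFrom_eq_iUnion_stInterval {ρ : Ω → ℝ≥0∞} {ρs : ℕ → Ω → ℝ≥0∞}
    (hlt : ∀ n ω, 0 < ρ ω → ρs n ω < ρ ω)
    (htend : ∀ ω, Filter.Tendsto (fun n => ρs n ω) Filter.atTop (nhds (ρ ω))) :
    (rayFrom ρ)ᶜ = ⋃ n, stInterval ({ω | ρ ω = 0}.indicator fun _ => ∞) (ρs n) := by
  ext ⟨ω, t⟩
  simp only [rayFrom, stInterval, mem_compl_iff, mem_ofPred_eq, not_le, mem_iUnion]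
  by_cases h0 : ρ ω = 0
  · simp [h0]
  · simp only [mem_ofPred_eq, h0, not_false_eq_true, indicator_of_notMem, zero_le, true_and]
    constructor
    · intro ht
      exact ((htend ω).eventually_const_lt ht).exists.imp fun _ => le_of_lt
    · rintro ⟨n, hn⟩
      exact hn.trans_lt (hlt n ω (pos_iff_ne_zero.2 h0))

lemma IsPredTime.rayFrom_mem_monotoneSouslinClass {ρ : Ω → ℝ≥0∞} (hρ : IsPredTime 𝔽 ρ) :
    rayFrom ρ ∈ monotoneSouslinClass (EStar 𝔽) := by
  rw [rayFrom_eq_iUnion_stInterval]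
  exact iUnion_mem_monotoneSouslinClass (fun _ hS _ hT => union_mem_EStar hS hT) fun n =>
    mem_monotoneSouslinClass <| .inl <|
      stInterval_mem_EStar hρ (isStopTime_const _) fun _ => ENNReal.natCast_lt_top n

lemma IsPredTime.compl_rayFrom_mem_monotoneSouslinClass {ρ : Ω → ℝ≥0∞}
    (hρ : IsPredTime 𝔽 ρ) : (rayFrom ρ)ᶜ ∈ monotoneSouslinClass (EStar 𝔽) := by
  obtain ⟨hρ, ρs, hρs, hfin, -, hlt, -, htend⟩ := hρ
  rw [compl_rayFrom_eq_iUnion_stInterval hlt htend]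
  exact iUnion_mem_monotoneSouslinClass (fun _ hS _ hT => union_mem_EStar hS hT) fun n =>
    mem_monotoneSouslinClass <| .inl <|
      stInterval_mem_EStar (isPredTime_indicator_top hρ.measurableSet_eq_zero) (hρs n) (hfin n)

end Generators

/-- every predictable set is produced by the Souslin operation applied to
a monotone Souslin scheme with values in `ℰ*`. -/
theorem predictable_eq_souslin_monotone_scheme {Ω : Type*} {F : MeasurableSpace Ω}
    (𝔽 : Filtration ℝ≥0 F) (P : Set (Ω × ℝ≥0))
    (hP : MeasurableSet[predictableSigma 𝔽] P) :
    ∃ A : (k : ℕ) → (Fin (k + 1) → ℕ) → Set (Ω × ℝ≥0),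
      IsSouslinScheme (EStar 𝔽) A ∧ IsMonotoneScheme A ∧ P = souslinSet A := by
  refine mem_of_measurableSet_generateFrom (M := monotoneSouslinClass (EStar 𝔽)) ?_
    (mem_monotoneSouslinClass (.inl empty_mem_EStar)) (mem_monotoneSouslinClass (.inr rfl))
    (fun _ => iUnion_mem_monotoneSouslinClass fun _ hS _ hT => union_mem_EStar hS hT)
    (fun _ => iInter_mem_monotoneSouslinClass fun _ hS _ hT => inter_mem_EStar hS hT) hP
  rintro _ ⟨ρ, hρ, rfl⟩
  exact ⟨hρ.rayFrom_mem_monotoneSouslinClass, hρ.compl_rayFrom_mem_monotoneSouslinClass⟩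
end

section
/- Let (Ω, F, ℙ) be a probability space with a filtration (F_t)_{t∈ℝ₊} satisfying ⋁_t F_t ⊆ F. For every set O in the optional σ-algebra 𝒪 there exists a set P in the predictable σ-algebra 𝒫 such that O \ P is a thin set and P \ O is a totally inaccessible thin set. -/
/-!
Call `O` approximable if some predictable `S` makes `O \ S` thin and `S \ O` a totally
inaccessible thin set. An optional subset of a (totally inaccessible) thin set is again one:
restrict each stopping time to the event that its graph point lies in the subset. Hence
approximable optional sets are closed under countable unions and intersections, and it suffices
to treat each generator `⟦τ, ∞⟦` together with its complement `⟦0, τ⟦`. For `⟦τ, ∞⟦` take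
`⟧τ, ∞⟦`, which misses only `⟦τ⟧`. For `⟦0, τ⟦` take `⟦0, τ⟧` minus the graphs of predictable
times `ρₙ`, chosen by exhaustion so that for every predictable `ρ` the event `{τ = ρ < ∞}` is
covered by the `{τ = ρₙ}` up to a null set; what is left of `⟦τ⟧` is then the graph of a
totally inaccessible time.
-/

open MeasureTheory Set
open scoped NNReal ENNReal


variable {Ω : Type*}

/-- A totally inaccessible stopping time: `ℙ(τ = ρ < ∞) = 0` for every predictable
time `ρ`. -/
def IsTotallyInaccessible {Ω : Type*} {F : MeasurableSpace Ω} (𝔽 : Filtration ℝ≥0 F)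
    (P : Measure Ω) (τ : Ω → ℝ≥0∞) : Prop :=
  IsStopTime 𝔽 τ ∧ ∀ ρ : Ω → ℝ≥0∞, IsPredTime 𝔽 ρ → P {ω | τ ω = ρ ω ∧ τ ω < ⊤} = 0

/-- A thin set: a countable union of graphs of stopping times. -/
def IsThinSet {Ω : Type*} {F : MeasurableSpace Ω} (𝔽 : Filtration ℝ≥0 F)
    (S : Set (Ω × ℝ≥0)) : Prop :=
  ∃ τs : ℕ → Ω → ℝ≥0∞, (∀ n, IsStopTime 𝔽 (τs n)) ∧ S = ⋃ n, graph (τs n)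

/-- A totally inaccessible thin set: a countable union of graphs of totally
inaccessible stopping times. -/
def IsTotInaccThinSet {Ω : Type*} {F : MeasurableSpace Ω} (𝔽 : Filtration ℝ≥0 F)
    (P : Measure Ω) (S : Set (Ω × ℝ≥0)) : Prop :=
  ∃ τs : ℕ → Ω → ℝ≥0∞, (∀ n, IsTotallyInaccessible 𝔽 P (τs n)) ∧ S = ⋃ n, graph (τs n)


theorem Set.iUnion_diff_iUnion_subset {α ι : Type*} (s t : ι → Set α) :
    (⋃ i, s i) \ (⋃ i, t i) ⊆ ⋃ i, s i \ t i := by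
  intro x
  simp only [Set.mem_sdiff, mem_iUnion, not_exists]
  exact fun ⟨⟨i, hs⟩, ht⟩ => ⟨i, hs, ht i⟩

theorem Set.iInter_diff_iInter_subset {α ι : Type*} (s t : ι → Set α) :
    (⋂ i, s i) \ (⋂ i, t i) ⊆ ⋃ i, s i \ t i := by
  intro x
  simp only [Set.mem_sdiff, mem_iInter, mem_iUnion, not_forall]
  exact fun ⟨hs, i, ht⟩ => ⟨i, hs i, ht⟩

theorem MeasureTheory.exists_seq_measure_diff_iUnion_eq_zero {α ι : Type*}
    [MeasurableSpace α] [Nonempty ι] (μ : Measure α) [IsFiniteMeasure μ] {E : ι → Set α}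
    (hE : ∀ i, MeasurableSet (E i)) :
    ∃ j : ℕ → ι, ∀ i, μ (E i \ ⋃ n, E (j n)) = 0 := by
  set M := ⨆ j : ℕ → ι, μ (⋃ n, E (j n))
  obtain ⟨u, -, hu, hmem⟩ := exists_seq_tendsto_sSup (range_nonempty fun j : ℕ → ι =>
    μ (⋃ n, E (j n))) (OrderTop.bddAbove _)
  choose j hj using hmem
  set J : ℕ → ι := fun m => j m.unpair.1 m.unpair.2
  set U := ⋃ m, E (J m)
  have hUM : μ U = M := by
    refine le_antisymm (le_iSup (fun j : ℕ → ι => μ (⋃ n, E (j n))) J) ?_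
    refine le_of_tendsto' hu fun k => ?_
    rw [← hj k, show U = ⋃ k, ⋃ n, E (j k n) from iUnion_unpair fun k n => E (j k n)]
    exact measure_mono (subset_iUnion (fun k => ⋃ n, E (j k n)) k)
  refine ⟨J, fun i => ?_⟩
  -- `U` already has maximal measure, so adjoining `E i` to the sequence cannot enlarge it.
  have hle : μ U + μ (E i \ U) ≤ μ U + 0 :=
    calc μ U + μ (E i \ U) = μ (E i ∪ U) := by
          rw [← measure_union disjoint_sdiff_right ((hE i).diff (.iUnion fun m => hE _)),
            union_sdiff_self, union_comm]
      _ = μ (⋃ n, E (Nat.casesOn n i J : ι)) := by rw [← union_iUnion_nat_succ]; rfl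
      _ ≤ μ U + 0 := by rw [add_zero, hUM]; exact le_iSup (fun j : ℕ → ι => μ (⋃ n, E (j n))) _
  exact nonpos_iff_eq_zero.1 (ENNReal.le_of_add_le_add_left (measure_ne_top μ U) hle)

section StoppingTimes

variable {F : MeasurableSpace Ω} {𝔽 : Filtration ℝ≥0 F} {τ : Ω → ℝ≥0∞}

theorem IsStopTime.isStoppingTime (hτ : IsStopTime 𝔽 τ) : IsStoppingTime 𝔽 τ := hτ

theorem isStopTime_top : IsStopTime 𝔽 fun _ : Ω => ⊤ := fun _ => by simp

noncomputable def timeRestrict (τ : Ω → ℝ≥0∞) (A : Set Ω) : Ω → ℝ≥0∞ :=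
  open Classical in A.piecewise τ fun _ => ⊤

theorem timeRestrict_of_mem {A : Set Ω} {ω : Ω} (h : ω ∈ A) : timeRestrict τ A ω = τ ω := by
  simp [timeRestrict, h]

theorem timeRestrict_of_notMem {A : Set Ω} {ω : Ω} (h : ω ∉ A) : timeRestrict τ A ω = ⊤ := by
  simp [timeRestrict, h]

theorem timeRestrict_le_coe_iff {A : Set Ω} {ω : Ω} {t : ℝ≥0} :
    timeRestrict τ A ω ≤ t ↔ ω ∈ A ∧ τ ω ≤ t := by
  by_cases h : ω ∈ A <;> simp [timeRestrict_of_mem, timeRestrict_of_notMem, h]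

theorem timeRestrict_empty (τ : Ω → ℝ≥0∞) : timeRestrict τ ∅ = fun _ => ⊤ := by
  simp [timeRestrict]

theorem mem_graph_timeRestrict {A : Set Ω} {p : Ω × ℝ≥0} :
    p ∈ graph (timeRestrict τ A) ↔ p.1 ∈ A ∧ p ∈ graph τ := by
  by_cases h : p.1 ∈ A <;> simp [graph, timeRestrict_of_mem, timeRestrict_of_notMem, h]

theorem graph_top : graph (fun _ : Ω => ⊤) = ∅ :=
  eq_empty_of_forall_notMem fun _ h => ENNReal.top_ne_coe h

theorem isStopTime_timeRestrict {A : Set Ω}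
    (hA : ∀ t : ℝ≥0, MeasurableSet[𝔽 t] (A ∩ {ω | τ ω ≤ t})) :
    IsStopTime 𝔽 (timeRestrict τ A) := by
  intro t
  simp only [timeRestrict_le_coe_iff]
  exact hA t

theorem mem_projOmega_inter_graph {U : Set (Ω × ℝ≥0)} {ω : Ω} :
    ω ∈ projOmega (U ∩ graph τ) ↔ ∃ t : ℝ≥0, τ ω = t ∧ (ω, t) ∈ U := by
  simp [projOmega, graph, and_comm]

theorem mem_projOmega_inter_graph_iff_lt_top {U : Set (Ω × ℝ≥0)} {ω : Ω} :
    ω ∈ projOmega (U ∩ graph τ) ↔ τ ω < ⊤ ∧ (ω, (τ ω).toNNReal) ∈ U := by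
  rw [mem_projOmega_inter_graph]
  constructor
  · rintro ⟨t, ht, hU⟩
    simpa [ht] using hU
  · rintro ⟨hfin, hU⟩
    exact ⟨_, (ENNReal.coe_toNNReal hfin.ne).symm, hU⟩

theorem graph_timeRestrict_projOmega (τ : Ω → ℝ≥0∞) (U : Set (Ω × ℝ≥0)) :
    graph (timeRestrict τ (projOmega (U ∩ graph τ))) = U ∩ graph τ := by
  ext ⟨ω, t⟩
  rw [mem_graph_timeRestrict, mem_projOmega_inter_graph]
  constructor
  · rintro ⟨⟨s, hs, hU⟩, ht⟩
    obtain rfl : s = t := ENNReal.coe_injective (hs.symm.trans ht)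
    exact ⟨hU, ht⟩
  · rintro ⟨hU, ht⟩
    exact ⟨⟨t, ht, hU⟩, ht⟩

theorem IsStopTime.measurableSet_projOmega_inter_graph (hτ : IsStopTime 𝔽 τ)
    {U : Set (Ω × ℝ≥0)} (hU : MeasurableSet[optionalSigma 𝔽] U) :
    MeasurableSet[hτ.isStoppingTime.measurableSpace] (projOmega (U ∩ graph τ)) := by
  have hfin : MeasurableSet[hτ.isStoppingTime.measurableSpace] {ω | τ ω < ⊤} :=
    hτ.isStoppingTime.measurable measurableSet_Iio
  induction U, hU using MeasurableSpace.generateFrom_induction with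
  | hC U hU =>
    obtain ⟨θ, hθ, rfl⟩ := hU
    have : projOmega (rayFrom θ ∩ graph τ) = {ω | θ ω ≤ τ ω} ∩ {ω | τ ω < ⊤} := by
      ext ω
      simp only [mem_projOmega_inter_graph_iff_lt_top, rayFrom, mem_ofPred_eq, mem_inter_iff]
      constructor
      · rintro ⟨hlt, hle⟩
        exact ⟨by rwa [ENNReal.coe_toNNReal hlt.ne] at hle, hlt⟩
      · rintro ⟨hle, hlt⟩
        exact ⟨hlt, by rwa [ENNReal.coe_toNNReal hlt.ne]⟩
    rw [this]
    exact (hθ.isStoppingTime.measurableSet_stopping_time_le hτ.isStoppingTime).inter hfin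
  | empty => simp [projOmega]
  | compl U _ hU =>
    have : projOmega (Uᶜ ∩ graph τ) = {ω | τ ω < ⊤} \ projOmega (U ∩ graph τ) := by
      ext ω
      simp only [mem_projOmega_inter_graph_iff_lt_top, Set.mem_sdiff, mem_ofPred_eq, mem_compl_iff]
      tauto
    rw [this]
    exact hfin.diff hU
  | iUnion U _ hU =>
    rw [iUnion_inter, projOmega, image_iUnion]
    exact .iUnion hU

end StoppingTimes

section ThinSets

variable {F : MeasurableSpace Ω} {𝔽 : Filtration ℝ≥0 F} {P : Measure Ω} {τ : Ω → ℝ≥0∞}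

def IsGraphUnionOf (p : (Ω → ℝ≥0∞) → Prop) (S : Set (Ω × ℝ≥0)) : Prop :=
  ∃ τs : ℕ → Ω → ℝ≥0∞, (∀ n, p (τs n)) ∧ S = ⋃ n, graph (τs n)

theorem isGraphUnionOf_empty {p : (Ω → ℝ≥0∞) → Prop} (hp : p fun _ => ⊤) :
    IsGraphUnionOf p ∅ :=
  ⟨fun _ _ => ⊤, fun _ => hp, by simp [graph_top]⟩

theorem IsGraphUnionOf.iUnion {p : (Ω → ℝ≥0∞) → Prop} {S : ℕ → Set (Ω × ℝ≥0)}
    (h : ∀ n, IsGraphUnionOf p (S n)) : IsGraphUnionOf p (⋃ n, S n) := by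
  choose τs hτs hS using h
  refine ⟨fun m => τs m.unpair.1 m.unpair.2, fun m => hτs _ _, ?_⟩
  rw [iUnion_unpair fun n k => graph (τs n k)]
  exact iUnion_congr hS

theorem IsGraphUnionOf.of_subset {p : (Ω → ℝ≥0∞) → Prop} (hst : ∀ τ, p τ → IsStopTime 𝔽 τ)
    (hres : ∀ τ A, p τ → (∀ t : ℝ≥0, MeasurableSet[𝔽 t] (A ∩ {ω | τ ω ≤ t})) →
      p (timeRestrict τ A))
    {S U : Set (Ω × ℝ≥0)} (hS : IsGraphUnionOf p S) (hU : MeasurableSet[optionalSigma 𝔽] U)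
    (hUS : U ⊆ S) : IsGraphUnionOf p U := by
  obtain ⟨τs, hτs, rfl⟩ := hS
  refine ⟨fun n => timeRestrict (τs n) (projOmega (U ∩ graph (τs n))), fun n => hres _ _ (hτs n)
    ((hst _ (hτs n)).measurableSet_projOmega_inter_graph hU).2, ?_⟩
  simp only [graph_timeRestrict_projOmega, ← inter_iUnion, inter_eq_left.2 hUS]

theorem IsThinSet.iUnion {S : ℕ → Set (Ω × ℝ≥0)} (h : ∀ n, IsThinSet 𝔽 (S n)) :
    IsThinSet 𝔽 (⋃ n, S n) :=
  IsGraphUnionOf.iUnion h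

theorem IsThinSet.of_subset {S U : Set (Ω × ℝ≥0)} (hS : IsThinSet 𝔽 S)
    (hU : MeasurableSet[optionalSigma 𝔽] U) (hUS : U ⊆ S) : IsThinSet 𝔽 U :=
  IsGraphUnionOf.of_subset (fun _ h => h) (fun _ _ _ => isStopTime_timeRestrict) hS hU hUS

theorem isThinSet_empty : IsThinSet 𝔽 ∅ :=
  isGraphUnionOf_empty isStopTime_top

theorem isTotallyInaccessible_top : IsTotallyInaccessible 𝔽 P fun _ => ⊤ :=
  ⟨isStopTime_top, fun _ _ => by simp⟩

theorem isTotallyInaccessible_timeRestrict {A : Set Ω} (hτ : IsTotallyInaccessible 𝔽 P τ)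
    (hA : ∀ t : ℝ≥0, MeasurableSet[𝔽 t] (A ∩ {ω | τ ω ≤ t})) :
    IsTotallyInaccessible 𝔽 P (timeRestrict τ A) := by
  refine ⟨isStopTime_timeRestrict hA, fun ρ hρ => measure_mono_null (fun ω hω => ?_) (hτ.2 ρ hρ)⟩
  by_cases h : ω ∈ A
  · simpa [timeRestrict_of_mem h] using hω
  · simp [timeRestrict_of_notMem h] at hω

theorem IsTotInaccThinSet.iUnion {S : ℕ → Set (Ω × ℝ≥0)}
    (h : ∀ n, IsTotInaccThinSet 𝔽 P (S n)) : IsTotInaccThinSet 𝔽 P (⋃ n, S n) :=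
  IsGraphUnionOf.iUnion h

theorem IsTotInaccThinSet.of_subset {S U : Set (Ω × ℝ≥0)} (hS : IsTotInaccThinSet 𝔽 P S)
    (hU : MeasurableSet[optionalSigma 𝔽] U) (hUS : U ⊆ S) : IsTotInaccThinSet 𝔽 P U :=
  IsGraphUnionOf.of_subset (fun _ h => h.1) (fun _ _ => isTotallyInaccessible_timeRestrict)
    hS hU hUS

theorem isTotInaccThinSet_empty : IsTotInaccThinSet 𝔽 P ∅ :=
  isGraphUnionOf_empty isTotallyInaccessible_top

end ThinSets

section Predictable

variable {F : MeasurableSpace Ω} {𝔽 : Filtration ℝ≥0 F} {τ : Ω → ℝ≥0∞}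

theorem predictableSigma_le_optionalSigma : predictableSigma 𝔽 ≤ optionalSigma 𝔽 :=
  MeasurableSpace.generateFrom_le fun _ ⟨ρ, hρ, hs⟩ =>
    MeasurableSpace.measurableSet_generateFrom ⟨ρ, hρ.1, hs⟩

theorem IsStopTime.measurableSet_optional_rayFrom (hτ : IsStopTime 𝔽 τ) :
    MeasurableSet[optionalSigma 𝔽] (rayFrom τ) :=
  MeasurableSpace.measurableSet_generateFrom ⟨τ, hτ, rfl⟩

theorem IsPredTime.measurableSet_predictable_rayFrom {ρ : Ω → ℝ≥0∞} (hρ : IsPredTime 𝔽 ρ) :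
    MeasurableSet[predictableSigma 𝔽] (rayFrom ρ) :=
  MeasurableSpace.measurableSet_generateFrom ⟨ρ, hρ, rfl⟩

theorem isPredTime_timeRestrict_const {A : Set Ω} {q r : ℝ≥0} (hA : MeasurableSet[𝔽 q] A)
    (hqr : q < r) : IsPredTime 𝔽 (timeRestrict (fun _ => r) A) := by
  classical
  obtain ⟨u, hu_mono, hu_mem, hu_lim⟩ := exists_seq_strictMono_tendsto' hqr
  -- Off `A` the announcing times are kept `≥ u n`, so that `A ∈ 𝓕 (u n)` makes them stopping times.
  refine ⟨(isStoppingTime_const 𝔽 r).piecewise_of_le isStopTime_top.isStoppingTime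
      (fun _ => mod_cast hqr.le) (fun _ => le_top) hA,
    fun n => A.piecewise (fun _ => ((u n : ℝ≥0) : ℝ≥0∞)) fun _ => ((r + n : ℝ≥0) : ℝ≥0∞),
    fun n => isStoppingTime_piecewise_const ((hu_mem n).2.le.trans le_self_add)
      (𝔽.mono (hu_mem n).1.le _ hA), ?_, ?_, ?_, ?_, ?_⟩
  · intro n ω
    by_cases h : ω ∈ A <;> simp [h]
  · intro n ω
    by_cases h : ω ∈ A <;> simp [timeRestrict, h, (hu_mem n).2.le]
  · intro n ω _
    by_cases h : ω ∈ A <;> simp [timeRestrict, h, (hu_mem n).2]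
  · intro ω m n hmn
    by_cases h : ω ∈ A <;> simp [h]
    · exact hu_mono.monotone hmn
    · exact hmn
  · intro ω
    by_cases h : ω ∈ A <;> simp only [timeRestrict, Set.piecewise, h, if_true, if_false]
    · exact ENNReal.tendsto_coe.2 hu_lim
    · refine tendsto_nhds_top_mono ENNReal.tendsto_nat_nhds_top (.of_forall fun n => ?_)
      simp

theorem isPredTime_top : IsPredTime 𝔽 fun _ : Ω => ⊤ := by
  simpa only [timeRestrict_empty] using
    isPredTime_timeRestrict_const (𝔽 := 𝔽) (r := 1) (@MeasurableSet.empty _ (𝔽 0)) zero_lt_one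

theorem rayFrom_timeRestrict_const (A : Set Ω) (r : ℝ≥0) :
    rayFrom (timeRestrict (fun _ => r) A) = {p | p.1 ∈ A ∧ r ≤ p.2} := by
  ext ⟨ω, t⟩
  by_cases h : ω ∈ A <;> simp [rayFrom, timeRestrict, h]

theorem IsStopTime.measurableSet_predictable_lt (hτ : IsStopTime 𝔽 τ) :
    MeasurableSet[predictableSigma 𝔽] {p : Ω × ℝ≥0 | τ p.1 < p.2} := by
  obtain ⟨D, hD, hDense⟩ := TopologicalSpace.exists_countable_dense ℝ≥0
  have : {p : Ω × ℝ≥0 | τ p.1 < p.2} = ⋃ q ∈ D, ⋃ r ∈ D, ⋃ (_ : q < r),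
      rayFrom (timeRestrict (fun _ => r) {ω | τ ω ≤ q}) := by
    ext ⟨ω, t⟩
    simp only [rayFrom_timeRestrict_const, mem_iUnion, mem_ofPred_eq, exists_prop]
    constructor
    · intro h
      obtain ⟨s, hs, hst⟩ := ENNReal.lt_iff_exists_coe.1 h
      obtain ⟨q, hqD, hsq, hqt⟩ := hDense.exists_between (ENNReal.coe_lt_coe.1 hst)
      obtain ⟨r, hrD, hqr, hrt⟩ := hDense.exists_between hqt
      exact ⟨q, hqD, r, hrD, hqr, hs ▸ ENNReal.coe_le_coe.2 hsq.le, hrt.le⟩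
    · rintro ⟨q, -, r, -, hqr, hτq, hrt⟩
      exact hτq.trans_lt (ENNReal.coe_lt_coe.2 (hqr.trans_le hrt))
  rw [this]
  exact .biUnion hD fun q _ => .biUnion hD fun r _ => .iUnion fun hqr =>
    (isPredTime_timeRestrict_const (hτ q) hqr).measurableSet_predictable_rayFrom

theorem IsStopTime.measurableSet_predictable_le (hτ : IsStopTime 𝔽 τ) :
    MeasurableSet[predictableSigma 𝔽] {p : Ω × ℝ≥0 | (p.2 : ℝ≥0∞) ≤ τ p.1} := by
  simpa only [compl_ofPred, not_lt] using hτ.measurableSet_predictable_lt.compl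

theorem IsPredTime.measurableSet_predictable_graph {ρ : Ω → ℝ≥0∞} (hρ : IsPredTime 𝔽 ρ) :
    MeasurableSet[predictableSigma 𝔽] (graph ρ) := by
  have : graph ρ = rayFrom ρ \ {p | ρ p.1 < p.2} := by
    ext p
    simp [graph, rayFrom, le_antisymm_iff]
  rw [this]
  exact hρ.measurableSet_predictable_rayFrom.diff hρ.1.measurableSet_predictable_lt

end Predictable

section Approximation

variable {F : MeasurableSpace Ω} {𝔽 : Filtration ℝ≥0 F} {P : Measure Ω} {τ : Ω → ℝ≥0∞}

def HasPredictableApprox (𝔽 : Filtration ℝ≥0 F) (P : Measure Ω) (O : Set (Ω × ℝ≥0)) :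
    Prop :=
  ∃ S, MeasurableSet[predictableSigma 𝔽] S ∧ IsThinSet 𝔽 (O \ S) ∧
    IsTotInaccThinSet 𝔽 P (S \ O)

theorem hasPredictableApprox_of_predictable {O : Set (Ω × ℝ≥0)}
    (hO : MeasurableSet[predictableSigma 𝔽] O) : HasPredictableApprox 𝔽 P O :=
  ⟨O, hO, by simpa using isThinSet_empty, by simpa using isTotInaccThinSet_empty⟩

theorem IsStopTime.hasPredictableApprox_rayFrom (hτ : IsStopTime 𝔽 τ) :
    HasPredictableApprox 𝔽 P (rayFrom τ) := by
  refine ⟨{p | τ p.1 < p.2}, hτ.measurableSet_predictable_lt,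
    ⟨fun _ => τ, fun _ => hτ, ?_⟩, ?_⟩
  · ext p
    simp [rayFrom, graph, le_antisymm_iff]
  · have : {p : Ω × ℝ≥0 | τ p.1 < p.2} \ rayFrom τ = ∅ :=
      sdiff_eq_empty.2 fun p (hp : τ p.1 < p.2) => show τ p.1 ≤ p.2 from hp.le
    rw [this]
    exact isTotInaccThinSet_empty

theorem IsStopTime.hasPredictableApprox_compl_rayFrom [IsFiniteMeasure P]
    (hτ : IsStopTime 𝔽 τ) : HasPredictableApprox 𝔽 P (rayFrom τ)ᶜ := by
  let E : {ρ // IsPredTime 𝔽 ρ} → Set Ω := fun ρ => {ω | τ ω = ρ.1 ω ∧ τ ω < ⊤}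
  have hE ρ : MeasurableSet[hτ.isStoppingTime.measurableSpace] (E ρ) :=
    (hτ.isStoppingTime.measurableSet_eq_stopping_time ρ.2.1.isStoppingTime).inter
      (hτ.isStoppingTime.measurable measurableSet_Iio)
  have : Nonempty {ρ // IsPredTime 𝔽 ρ} := ⟨⟨_, isPredTime_top⟩⟩
  obtain ⟨ρ, hρ⟩ := exists_seq_measure_diff_iUnion_eq_zero P fun ρ =>
    hτ.isStoppingTime.measurableSpace_le _ (hE ρ)
  let C := (⋃ n, E (ρ n))ᶜ
  have hC : IsTotallyInaccessible 𝔽 P (timeRestrict τ C) := by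
    refine ⟨isStopTime_timeRestrict (MeasurableSet.compl (.iUnion fun n => hE (ρ n))).2,
      fun ρ' hρ' => measure_mono_null (fun ω hω => ?_) (hρ ⟨ρ', hρ'⟩)⟩
    by_cases h : ω ∈ C
    · rw [mem_ofPred_eq, timeRestrict_of_mem h] at hω
      exact ⟨hω, h⟩
    · simp [timeRestrict_of_notMem h] at hω
  let S := {p : Ω × ℝ≥0 | (p.2 : ℝ≥0∞) ≤ τ p.1} \ ⋃ n, graph (ρ n).1
  have hS : MeasurableSet[predictableSigma 𝔽] S := hτ.measurableSet_predictable_le.diff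
    (.iUnion fun n => (ρ n).2.measurableSet_predictable_graph)
  refine ⟨S, hS, IsThinSet.of_subset ⟨fun n => (ρ n).1, fun n => (ρ n).2.1, rfl⟩
    (hτ.measurableSet_optional_rayFrom.compl.diff (predictableSigma_le_optionalSigma _ hS))
    fun p ⟨hlt, hpS⟩ => ?_, ⟨fun _ => timeRestrict τ C, fun _ => hC, ?_⟩⟩
  · by_contra hp
    exact hpS ⟨(not_le.1 (show ¬τ p.1 ≤ p.2 from hlt)).le, hp⟩
  · rw [iUnion_const]
    ext ⟨ω, t⟩
    rw [mem_graph_timeRestrict]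
    simp only [S, C, E, graph, rayFrom, Set.mem_sdiff, mem_compl_iff, mem_iUnion, mem_ofPred_eq,
      not_exists, not_not]
    constructor
    · rintro ⟨⟨hle, hne⟩, hge⟩
      have ht := le_antisymm hge hle
      exact ⟨fun n hn => hne n (hn.1.symm.trans ht), ht⟩
    · rintro ⟨hC, ht⟩
      exact ⟨⟨ht.ge, fun n h => hC n ⟨ht.trans h.symm, ht ▸ ENNReal.coe_lt_top⟩⟩, ht.le⟩

theorem hasPredictableApprox_of_diff_subset {O S : ℕ → Set (Ω × ℝ≥0)} {O' S' : Set (Ω × ℝ≥0)}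
    (hO' : MeasurableSet[optionalSigma 𝔽] O') (hS' : MeasurableSet[predictableSigma 𝔽] S')
    (hOS : ∀ n, IsThinSet 𝔽 (O n \ S n)) (hSO : ∀ n, IsTotInaccThinSet 𝔽 P (S n \ O n))
    (hOS' : O' \ S' ⊆ ⋃ n, O n \ S n) (hSO' : S' \ O' ⊆ ⋃ n, S n \ O n) :
    HasPredictableApprox 𝔽 P O' :=
  have hS'opt := predictableSigma_le_optionalSigma _ hS'
  ⟨S', hS', (IsThinSet.iUnion hOS).of_subset (hO'.diff hS'opt) hOS',
    (IsTotInaccThinSet.iUnion hSO).of_subset (hS'opt.diff hO') hSO'⟩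

theorem HasPredictableApprox.iUnion {O : ℕ → Set (Ω × ℝ≥0)}
    (hO : ∀ n, MeasurableSet[optionalSigma 𝔽] (O n)) (h : ∀ n, HasPredictableApprox 𝔽 P (O n)) :
    HasPredictableApprox 𝔽 P (⋃ n, O n) := by
  choose S hS hOS hSO using h
  exact hasPredictableApprox_of_diff_subset (.iUnion hO) (.iUnion hS) hOS hSO
    (iUnion_diff_iUnion_subset O S) (iUnion_diff_iUnion_subset S O)

theorem HasPredictableApprox.iInter {O : ℕ → Set (Ω × ℝ≥0)}
    (hO : ∀ n, MeasurableSet[optionalSigma 𝔽] (O n)) (h : ∀ n, HasPredictableApprox 𝔽 P (O n)) :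
    HasPredictableApprox 𝔽 P (⋂ n, O n) := by
  choose S hS hOS hSO using h
  exact hasPredictableApprox_of_diff_subset (.iInter hO) (.iInter hS) hOS hSO
    (iInter_diff_iInter_subset O S) (iInter_diff_iInter_subset S O)

end Approximation

/-- every optional set differs from some predictable set by a thin set:
`O \ P` is thin and `P \ O` is a totally inaccessible thin set. -/
theorem optional_approx_predictable {Ω : Type*} {F : MeasurableSpace Ω}
    (𝔽 : Filtration ℝ≥0 F) (P : Measure Ω) [IsProbabilityMeasure P]
    (O : Set (Ω × ℝ≥0)) (hO : MeasurableSet[optionalSigma 𝔽] O) :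
    ∃ S : Set (Ω × ℝ≥0), MeasurableSet[predictableSigma 𝔽] S ∧
      IsThinSet 𝔽 (O \ S) ∧ IsTotInaccThinSet 𝔽 P (S \ O) := by
  suffices h : HasPredictableApprox 𝔽 P O ∧ HasPredictableApprox 𝔽 P Oᶜ from h.1
  induction O, hO using MeasurableSpace.generateFrom_induction with
  | hC O hO =>
    obtain ⟨τ, hτ, rfl⟩ := hO
    exact ⟨hτ.hasPredictableApprox_rayFrom, hτ.hasPredictableApprox_compl_rayFrom⟩
  | empty =>
    exact ⟨hasPredictableApprox_of_predictable (@MeasurableSet.empty _ (predictableSigma 𝔽)),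
      hasPredictableApprox_of_predictable (by simp)⟩
  | compl O _ h => exact ⟨h.2, by simpa using h.1⟩
  | iUnion O hO h =>
    refine ⟨.iUnion hO fun n => (h n).1, ?_⟩
    rw [compl_iUnion]
    exact .iInter (fun n => (hO n).compl) fun n => (h n).2
end
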